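/- Under the hypotheses of the eigenspace decomposition (V = ⊕ V^k, σδ − δσ = k on V^k, σ = 0 on V^0 ⊕ V^1), the projector p_{1,k}: V^k → F_{0,k} onto the 0-eigenspace of δσ is given by p_{1,k} = Σ_{i=0}^{k−1} (−1)^i · (2^i (2k−i−2)!)/((2k−2)! i!) · δ^i ∘ σ^i. -/

import Mathlib

/-!
Write `u i = δ^i σ^i x`. The commutation relation gives the ladder identity
`δσ (u i) = u (i+1) + λ_{i+1,k} u i` for `i < k`, and `u k = 0`. The coefficients `c i` of the
formula satisfy `c (i+1) λ_{i+2,k} = -c i` and `c 0 = 1`, so `δσ (∑ c i u i)` telescopes to `0`.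
Since the `λ_{m,k}`, `1 ≤ m ≤ k`, are distinct, descending induction along the ladder places each
`u i` in the sum of the eigenspaces `λ_{m,k}`, `i < m ≤ k`; for `i ≥ 1` this is the complement of
`F_{0,k}`, and `x - p = -∑_{i ≥ 1} c i u i`.
-/

/-- `λ_{m,k} = ½(m−1)(2k−m)`. -/
noncomputable def lam (m k : ℕ) : ℝ := ((m : ℝ) - 1) * (2 * (k : ℝ) - (m : ℝ)) / 2

open Finset

namespace Module.End

variable {K M : Type*} [Field K] [AddCommGroup M] [Module K M]

theorem map_sum_smul_ladder (T : Module.End K M) {u : ℕ → M} {μ c : ℕ → K} (hμ : μ 1 = 0)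
    {n : ℕ} (hT : ∀ i ≤ n, T (u i) = u (i + 1) + μ (i + 1) • u i)
    (hc : ∀ i < n, c (i + 1) * μ (i + 2) = -c i) :
    T (∑ i ∈ range (n + 1), c i • u i) = c n • u (n + 1) := by
  induction n with
  | zero => simp [hT 0 le_rfl, hμ]
  | succ n ih =>
    rw [sum_range_succ, map_add, ih (fun i hi => hT i (by omega)) (fun i hi => hc i (by omega)),
      map_smul, hT (n + 1) le_rfl, smul_add, smul_smul, hc n (by omega)]
    module

theorem mem_inf_eigenspace_sup_of_sub_smul_mem {T : Module.End K M} {W : Submodule K M}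
    {ι : Type*} {s : Finset ι} {μ : ι → K} {a : K} (hs : ∀ m ∈ s, μ m ≠ a) {v : M} (hv : v ∈ W)
    (hTv : T v - a • v ∈ ⨆ m ∈ s, W ⊓ T.eigenspace (μ m)) :
    v ∈ W ⊓ T.eigenspace a ⊔ ⨆ m ∈ s, W ⊓ T.eigenspace (μ m) := by
  obtain ⟨w, hw⟩ := (Submodule.mem_iSup_finset_iff_exists_sum _ _).mp hTv
  have hwW : ∀ m, (w m : M) ∈ W := fun m => (w m).2.1
  have hwT : ∀ m, T (w m) = μ m • (w m : M) := fun m => mem_eigenspace_iff.mp (w m).2.2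
  -- `T - a` acts on the `μ m`-component of `T v - a v` as `μ m - a`, so it can be inverted there
  set z := ∑ m ∈ s, (μ m - a)⁻¹ • (w m : M)
  have hzW : z ∈ W := W.sum_mem fun m _ => W.smul_mem _ (hwW m)
  have hTz : T z - a • z = T v - a • v := by
    rw [← hw, map_sum, smul_sum, ← sum_sub_distrib]
    refine sum_congr rfl fun m hm => ?_
    have hne : μ m - a ≠ 0 := sub_ne_zero.mpr (hs m hm)
    rw [map_smul, hwT, smul_smul, smul_smul, ← sub_smul,
      show (μ m - a)⁻¹ * μ m - a * (μ m - a)⁻¹ = 1 by field_simp, one_smul]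
  have hvz : v - z ∈ W ⊓ T.eigenspace a := by
    refine ⟨W.sub_mem hv hzW, mem_eigenspace_iff.mpr ?_⟩
    rw [map_sub, smul_sub]
    linear_combination (norm := module) -hTz
  have hz : z ∈ ⨆ m ∈ s, W ⊓ T.eigenspace (μ m) :=
    Submodule.sum_mem _ fun m hm => Submodule.smul_mem _ _ <|
      Submodule.mem_iSup_of_mem m <| Submodule.mem_iSup_of_mem hm (w m).2
  simpa using Submodule.add_mem_sup hvz hz

theorem mem_iSup_inf_eigenspace_of_ladder {T : Module.End K M} {W : Submodule K M}
    {u : ℕ → M} {μ : ℕ → K} {n : ℕ} (hμ : Set.InjOn μ (Set.Icc 1 n)) (hW : ∀ i ≤ n, u i ∈ W)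
    (hT : ∀ i < n, T (u i) = u (i + 1) + μ (i + 1) • u i) (hn : u n = 0) {i : ℕ} (hi : i ≤ n) :
    u i ∈ ⨆ m ∈ Icc (i + 1) n, W ⊓ T.eigenspace (μ m) := by
  induction hi using Nat.decreasingInduction with
  | self => simp [hn]
  | of_succ i hi ih =>
    rw [← insert_Icc_add_one_left_eq_Icc (by omega : i + 1 ≤ n), Finset.iSup_insert]
    refine mem_inf_eigenspace_sup_of_sub_smul_mem (fun m hm heq => ?_) (hW i hi.le) ?_
    · rw [mem_Icc] at hm
      have := hμ (by simp; omega) (by simp; omega) heq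
      omega
    · rwa [hT i hi, add_sub_cancel_right]

end Module.End

theorem lam_one (k : ℕ) : lam 1 k = 0 := by simp [lam]

theorem lam_injOn (k : ℕ) : Set.InjOn (lam · k) (Set.Icc 1 k) := by
  refine StrictMonoOn.injOn fun a ha b hb hab => ?_
  have h1 : (1 : ℝ) ≤ a := by exact_mod_cast ha.1
  have h2 : (a : ℝ) + 1 ≤ b := by exact_mod_cast hab
  have h3 : (b : ℝ) ≤ k := by exact_mod_cast hb.2
  simp only [lam]
  nlinarith

noncomputable def projCoeff (k i : ℕ) : ℝ :=
  ((-1 : ℝ) ^ i * 2 ^ i * (Nat.factorial (2 * k - i - 2))) /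
    ((Nat.factorial (2 * k - 2)) * (Nat.factorial i))

theorem projCoeff_zero (k : ℕ) : projCoeff k 0 = 1 := by
  simp [projCoeff, Nat.factorial_ne_zero]

theorem projCoeff_succ_mul_lam {k i : ℕ} (hi : i + 1 < k) :
    projCoeff k (i + 1) * lam (i + 2) k = -projCoeff k i := by
  have hfac : 2 * k - i - 2 = (2 * k - (i + 1) - 2) + 1 := by omega
  have hcast : ((2 * k - (i + 1) - 2 : ℕ) : ℝ) = 2 * k - i - 3 := by
    rw [Nat.cast_sub (by omega), Nat.cast_sub (by omega)]
    push_cast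
    ring
  simp only [projCoeff, lam]
  rw [hfac, Nat.factorial_succ, Nat.factorial_succ]
  push_cast [hcast]
  field_simp
  ring

section Graded

variable {M : Type*} [AddCommGroup M] [Module ℝ M] {V : ℕ → Submodule ℝ M}
  {δ σ : Module.End ℝ M}

theorem pow_apply_mem_add (hδ : ∀ k, ∀ x ∈ V k, δ x ∈ V (k + 1)) (i : ℕ) {j : ℕ} {v : M}
    (hv : v ∈ V j) : (δ ^ i) v ∈ V (j + i) := by
  induction i with
  | zero => simpa using hv
  | succ i ih => simpa [pow_succ', ← add_assoc] using hδ _ _ ih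

theorem pow_apply_mem_sub (hσ : ∀ k, ∀ x ∈ V k, σ x ∈ V (k - 1)) (i : ℕ) {j : ℕ} {v : M}
    (hv : v ∈ V j) : (σ ^ i) v ∈ V (j - i) := by
  induction i with
  | zero => simpa using hv
  | succ i ih => simpa [pow_succ', Nat.sub_sub] using hσ _ _ ih

theorem pow_self_apply_eq_zero (hσ : ∀ k, ∀ x ∈ V k, σ x ∈ V (k - 1))
    (hσ1 : ∀ x ∈ V 1, σ x = 0) {k : ℕ} (hk : 1 ≤ k) {x : M} (hx : x ∈ V k) : (σ ^ k) x = 0 := by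
  obtain ⟨n, rfl⟩ : ∃ n, k = n + 1 := ⟨k - 1, by omega⟩
  rw [pow_succ', Module.End.mul_apply]
  exact hσ1 _ (by simpa using pow_apply_mem_sub hσ n hx)

theorem lower_raise_pow_apply (hδ : ∀ k, ∀ x ∈ V k, δ x ∈ V (k + 1))
    (hcomm : ∀ k, ∀ x ∈ V k, σ (δ x) - δ (σ x) = (k : ℝ) • x) (i : ℕ) {j : ℕ} {v : M}
    (hv : v ∈ V j) :
    σ ((δ ^ (i + 1)) v) =
      (δ ^ (i + 1)) (σ v) + ((i + 1) * j + i * (i + 1) / 2 : ℝ) • (δ ^ i) v := by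
  induction i generalizing j v with
  | zero =>
    simp only [zero_add, pow_one, pow_zero, Module.End.one_apply, Nat.cast_zero]
    linear_combination (norm := module) hcomm j v hv
  | succ i ih =>
    have hδσ : σ (δ v) = δ (σ v) + (j : ℝ) • v := by
      linear_combination (norm := module) hcomm j v hv
    rw [pow_succ, Module.End.mul_apply, ih (hδ j v hv), hδσ, map_add, map_smul,
      ← Module.End.mul_apply, ← pow_succ, ← Module.End.mul_apply (δ ^ i), ← pow_succ]
    push_cast
    module

theorem raise_lower_apply_ladder (hδ : ∀ k, ∀ x ∈ V k, δ x ∈ V (k + 1))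
    (hσ : ∀ k, ∀ x ∈ V k, σ x ∈ V (k - 1))
    (hcomm : ∀ k, ∀ x ∈ V k, σ (δ x) - δ (σ x) = (k : ℝ) • x) {k i : ℕ} (hi : i < k) {x : M}
    (hx : x ∈ V k) :
    (δ * σ) ((δ ^ i) ((σ ^ i) x)) =
      (δ ^ (i + 1)) ((σ ^ (i + 1)) x) + lam (i + 1) k • (δ ^ i) ((σ ^ i) x) := by
  cases i with
  | zero => simp [lam_one, pow_one]
  | succ i =>
    have hσx := pow_apply_mem_sub hσ (i + 1) hx
    have hcoef :
        ((i + 1) * ((k - (i + 1) : ℕ) : ℝ) + i * (i + 1) / 2 : ℝ) = lam (i + 1 + 1) k := by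
      rw [Nat.cast_sub hi.le, lam]
      push_cast
      ring
    rw [Module.End.mul_apply, lower_raise_pow_apply hδ hcomm i hσx, hcoef, map_add, map_smul,
      ← Module.End.mul_apply δ, ← pow_succ', ← Module.End.mul_apply δ, ← pow_succ',
      ← Module.End.mul_apply σ, ← pow_succ']

end Graded

theorem stmt12_general {M : Type*} [AddCommGroup M] [Module ℝ M]
    (V : ℕ → Submodule ℝ M)
    (δ σ : Module.End ℝ M)
    (hδ : ∀ k, ∀ x ∈ V k, δ x ∈ V (k + 1))
    (hσ : ∀ k, ∀ x ∈ V k, σ x ∈ V (k - 1))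
    (hcomm : ∀ k, ∀ x ∈ V k, σ (δ x) - δ (σ x) = (k : ℝ) • x)
    (hσ1 : ∀ x ∈ V 1, σ x = 0)
    (k : ℕ) (hk : 1 ≤ k) (x : M) (hx : x ∈ V k) :
    ∀ p : M,
      p = ∑ i ∈ Finset.range k,
          (((-1 : ℝ) ^ i * 2 ^ i * (Nat.factorial (2 * k - i - 2))) /
              ((Nat.factorial (2 * k - 2)) * (Nat.factorial i))) • (δ ^ i) ((σ ^ i) x) →
      p ∈ V k ∧ δ (σ p) = 0 ∧
      x - p ∈ ⨆ m ∈ Finset.Icc 2 k, V k ⊓ Module.End.eigenspace (δ * σ) (lam m k) := by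
  intro p hp
  set u : ℕ → M := fun i => (δ ^ i) ((σ ^ i) x)
  change p = ∑ i ∈ range k, projCoeff k i • u i at hp
  have hladder : ∀ i < k, (δ * σ) (u i) = u (i + 1) + lam (i + 1) k • u i :=
    fun i hi => raise_lower_apply_ladder hδ hσ hcomm hi hx
  have hu : ∀ i ≤ k, u i ∈ V k := fun i hi => by
    simpa [Nat.sub_add_cancel hi] using
      pow_apply_mem_add hδ i (pow_apply_mem_sub hσ i hx)
  have huk : u k = 0 := by simp [u, pow_self_apply_eq_zero hσ hσ1 hk hx]
  obtain ⟨n, rfl⟩ : ∃ n, k = n + 1 := ⟨k - 1, by omega⟩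
  refine ⟨?_, ?_, ?_⟩
  · exact hp ▸ Submodule.sum_mem _ fun i hi =>
      Submodule.smul_mem _ _ (hu i (by rw [mem_range] at hi; omega))
  · rw [← Module.End.mul_apply, hp, Module.End.map_sum_smul_ladder _ (μ := (lam · (n + 1)))
      (lam_one _) (fun i hi => hladder i (by omega))
      (fun i hi => projCoeff_succ_mul_lam (by omega)), huk, smul_zero]
  · rw [hp, sum_range_succ', projCoeff_zero, one_smul, show u 0 = x from rfl, sub_add_cancel_right]
    refine Submodule.neg_mem _ <| Submodule.sum_mem _ fun i hi => Submodule.smul_mem _ _ ?_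
    have hIcc : ∀ m, m ∈ Icc (i + 2) (n + 1) → m ∈ Icc 2 (n + 1) := fun m hm => by
      simp only [mem_Icc] at hm ⊢
      omega
    exact biSup_mono (f := fun m => V (n + 1) ⊓ (δ * σ).eigenspace (lam m (n + 1))) hIcc <|
      Module.End.mem_iSup_inf_eigenspace_of_ladder (lam_injOn _) hu hladder huk
        (i := i + 1) (by rw [mem_range] at hi; omega)

/-- Projector formula.  Under the hypotheses of the eigenspace decomposition
(`V = ⊕ V^k`, `σδ − δσ = k·id` on `V^k`, `σ = 0` on `V^0 ⊕ V^1`), the projector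
`p_{1,k} : V^k → F_{0,k}` onto the `0`-eigenspace of `δ∘σ` (along the other eigenspaces
`F_{λ_{m,k},k}`, `2 ≤ m ≤ k`) is given by
`p_{1,k} = Σ_{i=0}^{k−1} (−1)^i 2^i (2k−i−2)! / ((2k−2)! i!) · δ^i ∘ σ^i`:
for `x ∈ V^k`, the element `p = Σ_i … δ^i(σ^i x)` lies in `V^k`, is killed by `δ∘σ`,
and `x − p` lies in `⊕_{m=2}^k F_{λ_{m,k},k}`. -/
theorem stmt12 {M : Type*} [AddCommGroup M] [Module ℝ M]
    (V : ℕ → Submodule ℝ M)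
    (hindep : iSupIndep V) (hsup : iSup V = ⊤)
    (δ σ : Module.End ℝ M)
    (hδ : ∀ k, ∀ x ∈ V k, δ x ∈ V (k + 1))
    (hσ : ∀ k, ∀ x ∈ V k, σ x ∈ V (k - 1))
    (hcomm : ∀ k, ∀ x ∈ V k, σ (δ x) - δ (σ x) = (k : ℝ) • x)
    (hσ0 : ∀ x ∈ V 0, σ x = 0) (hσ1 : ∀ x ∈ V 1, σ x = 0)
    (k : ℕ) (hk : 1 ≤ k) (x : M) (hx : x ∈ V k) :
    ∀ p : M,
      p = ∑ i ∈ Finset.range k,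
          (((-1 : ℝ) ^ i * 2 ^ i * (Nat.factorial (2 * k - i - 2))) /
              ((Nat.factorial (2 * k - 2)) * (Nat.factorial i))) • (δ ^ i) ((σ ^ i) x) →
      p ∈ V k ∧ δ (σ p) = 0 ∧
      x - p ∈ ⨆ m ∈ Finset.Icc 2 k, V k ⊓ Module.End.eigenspace (δ * σ) (lam m k) :=
  stmt12_general V δ σ hδ hσ hcomm hσ1 k hk x hx
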